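/- A locally two-distance set X with a saturated subset Y satisfies: X \ Y is itself a locally two-distance set contained in an affine subspace of dimension at most d - dim(Y), where dim(Y) is the dimension of the affine span of Y. -/

import Mathlib

/-!
A point `x ∈ X \ Y` sees every point of `Y` at distance `α` or `β`. If it saw both, then
`A_X(x) = {α, β}` (as `|A_X(x)| ≤ 2`), and `Y ∪ {x}` would contradict the maximality of `Y`.
So every point of `X \ Y` is equidistant from `Y`: any two of them lie on the perpendicular
bisector of any two points of `Y`, hence the affine span of `X \ Y` has direction orthogonal to
the span of `Y`. Local two-distance-ness of `X \ Y` is inherited from `X`.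
-/

open scoped Classical

/-- `A_X(x)`: the set of distances from `x` to the other points of `X`. -/
noncomputable def distancesFrom {d : ℕ} (X : Finset (EuclideanSpace ℝ (Fin d)))
    (x : EuclideanSpace ℝ (Fin d)) : Finset ℝ :=
  (X.erase x).image (fun y => dist x y)

/-- `Y` is a saturated subset of `X`: `|Y| ≥ 2` and `Y` is maximal among subsets of `X` with
the property that, for some distinct positive reals `α, β`, every `y ∈ Y` has
`A_X(y) = {α, β}`. -/
def IsSaturated {d : ℕ} (X Y : Finset (EuclideanSpace ℝ (Fin d))) : Prop :=
  Y ⊆ X ∧ 2 ≤ Y.card ∧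
    (∃ α β : ℝ, 0 < α ∧ 0 < β ∧ α ≠ β ∧ ∀ y ∈ Y, distancesFrom X y = {α, β}) ∧
    ∀ Z, Y ⊆ Z → Z ⊆ X →
      (∃ α β : ℝ, 0 < α ∧ 0 < β ∧ α ≠ β ∧ ∀ y ∈ Z, distancesFrom X y = {α, β}) → Z = Y

open Module

section Equidistant

variable {V P : Type*} [NormedAddCommGroup V] [InnerProductSpace ℝ V] [MetricSpace P]
  [NormedAddTorsor V P]

theorem vectorSpan_le_orthogonal_vectorSpan_of_forall_dist_eq {s t : Set P}
    (ht : ∀ x ∈ t, ∀ y ∈ s, ∀ y' ∈ s, dist x y = dist x y') :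
    vectorSpan ℝ t ≤ (vectorSpan ℝ s)ᗮ := by
  rw [← Submodule.isOrtho_iff_le, vectorSpan_def, vectorSpan_def, Submodule.isOrtho_span]
  rintro _ ⟨x, hx, x', hx', rfl⟩ _ ⟨y', hy', y, hy, rfl⟩
  refine EuclideanGeometry.inner_vsub_vsub_of_dist_eq_of_dist_eq ?_ ?_ <;>
    rw [dist_comm y, dist_comm y'] <;> apply ht <;> assumption

theorem finrank_direction_affineSpan_le_of_forall_dist_eq [FiniteDimensional ℝ V] {s t : Set P}
    (ht : ∀ x ∈ t, ∀ y ∈ s, ∀ y' ∈ s, dist x y = dist x y') :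
    finrank ℝ (affineSpan ℝ t).direction ≤ finrank ℝ V - finrank ℝ (vectorSpan ℝ s) := by
  have hsum := (vectorSpan ℝ s).finrank_add_finrank_orthogonal
  have hle := Submodule.finrank_mono (vectorSpan_le_orthogonal_vectorSpan_of_forall_dist_eq ht)
  rw [direction_affineSpan]
  omega

end Equidistant

section LocallyTwoDistance

variable {d : ℕ} {X X' Y : Finset (EuclideanSpace ℝ (Fin d))} {x y : EuclideanSpace ℝ (Fin d)}

theorem distancesFrom_mono (h : X' ⊆ X) (x : EuclideanSpace ℝ (Fin d)) :
    distancesFrom X' x ⊆ distancesFrom X x :=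
  Finset.image_subset_image (Finset.erase_subset_erase x h)

theorem dist_mem_distancesFrom (hy : y ∈ X) (hxy : x ≠ y) : dist x y ∈ distancesFrom X x :=
  Finset.mem_image_of_mem _ (Finset.mem_erase.mpr ⟨hxy.symm, hy⟩)

theorem IsSaturated.distancesFrom_ne_of_mem_sdiff (hsat : IsSaturated X Y) {α β : ℝ}
    (hα : 0 < α) (hβ : 0 < β) (hαβ : α ≠ β) (hY : ∀ y ∈ Y, distancesFrom X y = {α, β})
    (hx : x ∈ X \ Y) : distancesFrom X x ≠ {α, β} := by
  obtain ⟨hxX, hxY⟩ := Finset.mem_sdiff.mp hx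
  intro hxαβ
  have hinsert : insert x Y = Y := by
    refine hsat.2.2.2 _ (Finset.subset_insert x Y) (Finset.insert_subset hxX hsat.1)
      ⟨α, β, hα, hβ, hαβ, fun z hz => ?_⟩
    rcases Finset.mem_insert.mp hz with rfl | hz
    exacts [hxαβ, hY z hz]
  exact hxY (hinsert ▸ Finset.mem_insert_self x Y)

theorem IsSaturated.dist_eq_of_mem_sdiff (hloc : ∀ x ∈ X, (distancesFrom X x).card ≤ 2)
    (hsat : IsSaturated X Y) (hx : x ∈ X \ Y) {y y' : EuclideanSpace ℝ (Fin d)}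
    (hy : y ∈ Y) (hy' : y' ∈ Y) : dist x y = dist x y' := by
  obtain ⟨α, β, hα, hβ, hαβ, hY⟩ := hsat.2.2.1
  obtain ⟨hxX, hxY⟩ := Finset.mem_sdiff.mp hx
  have hxz : ∀ {z}, z ∈ Y → x ≠ z := fun hz hxz => hxY (hxz ▸ hz)
  have hαβ_of_mem : ∀ {z}, z ∈ Y → dist x z = α ∨ dist x z = β := fun {z} hz => by
    simpa [dist_comm, hY z hz] using dist_mem_distancesFrom (X := X) hxX (hxz hz).symm
  by_contra hne
  have hpair : ({dist x y, dist x y'} : Finset ℝ) = {α, β} := by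
    rcases hαβ_of_mem hy with e | e <;> rcases hαβ_of_mem hy' with e' | e' <;>
      simp_all [Finset.pair_comm]
  have hsub : ({α, β} : Finset ℝ) ⊆ distancesFrom X x := hpair ▸ Finset.insert_subset
    (dist_mem_distancesFrom (hsat.1 hy) (hxz hy))
    (Finset.singleton_subset_iff.2 (dist_mem_distancesFrom (hsat.1 hy') (hxz hy')))
  refine hsat.distancesFrom_ne_of_mem_sdiff hα hβ hαβ hY hx
    (Finset.eq_of_subset_of_card_le hsub ?_).symm
  rw [Finset.card_pair hαβ]
  exact hloc x hxX

end LocallyTwoDistance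

/-- If `X ⊆ ℝ^d` is a locally two-distance set and `Y ⊆ X` is a saturated subset, then
`X \ Y` is itself a locally two-distance set and it is contained in an affine subspace of
dimension at most `d - dim Y`, where `dim Y` is the dimension of the affine span of `Y`. -/
theorem stmt8 (d : ℕ) (X Y : Finset (EuclideanSpace ℝ (Fin d)))
    (hloc : ∀ x ∈ X, (distancesFrom X x).card ≤ 2)
    (hsat : IsSaturated X Y) :
    (∀ x ∈ X \ Y, (distancesFrom (X \ Y) x).card ≤ 2) ∧
    ∃ W : AffineSubspace ℝ (EuclideanSpace ℝ (Fin d)),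
      Module.finrank ℝ W.direction
        ≤ d - Module.finrank ℝ (vectorSpan ℝ (Y : Set (EuclideanSpace ℝ (Fin d)))) ∧
      ((X \ Y : Finset (EuclideanSpace ℝ (Fin d))) : Set (EuclideanSpace ℝ (Fin d)))
        ⊆ (W : Set (EuclideanSpace ℝ (Fin d))) := by
  refine ⟨fun x hx => ?_, affineSpan ℝ ↑(X \ Y), ?_, subset_affineSpan ℝ _⟩
  · exact (Finset.card_le_card (distancesFrom_mono Finset.sdiff_subset x)).trans
      (hloc x (Finset.mem_sdiff.mp hx).1)
  · have h := finrank_direction_affineSpan_le_of_forall_dist_eq (s := (Y : Set _))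
      (t := ((X \ Y : Finset _) : Set (EuclideanSpace ℝ (Fin d))))
      fun x hx _ hy _ hy' => hsat.dist_eq_of_mem_sdiff hloc hx hy hy'
    rwa [finrank_euclideanSpace_fin] at h
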